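/- Let (X,d) be an unbounded metric space and let r̃ be a scaling sequence. If there exist two distinct vertices ν₁, ν₂ of the cluster graph G_{X,r̃} and a constant c∈ℝ⁺ with ρ⁰(ν₁)=ρ⁰(ν₂)=c, then there exists an independent set I ⊆ V(G_{X,r̃}) of cardinality continuum (|I|=𝔠) such that ρ⁰(v)=c for every v∈I. -/

import Mathlib

open Filter Topology
open scoped Classical

/-- An unbounded metric space. -/
def UnboundedSpace (X : Type*) [MetricSpace X] : Prop :=
  ¬ Bornology.IsBounded (Set.univ : Set X)

/-- A scaling sequence: positive reals tending to infinity. -/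
def ScalingSeq (r : ℕ → ℝ) : Prop :=
  (∀ n, 0 < r n) ∧ Filter.Tendsto r Filter.atTop Filter.atTop

/-- Two sequences are mutually stable w.r.t. `r` if `d(x_n, y_n)/r_n` has a finite limit. -/
def MutuallyStable {X : Type*} [MetricSpace X] (r : ℕ → ℝ) (x y : ℕ → X) : Prop :=
  ∃ L : ℝ, Filter.Tendsto (fun n => dist (x n) (y n) / r n) Filter.atTop (nhds L)

/-- `Seq(X, r̃)`: sequences going to infinity such that `d(x_n, p)/r_n` has a finite limit. -/
def SeqInf {X : Type*} [MetricSpace X] (r : ℕ → ℝ) (p : X) : Set (ℕ → X) :=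
  {x | Filter.Tendsto (fun n => dist (x n) p) Filter.atTop Filter.atTop ∧
    ∃ L : ℝ, Filter.Tendsto (fun n => dist (x n) p / r n) Filter.atTop (nhds L)}

/-- The relation `x̃ ≡ ỹ`, i.e. `d(x_n, y_n)/r_n → 0`. -/
def EquivSeq {X : Type*} [MetricSpace X] (r : ℕ → ℝ) (x y : ℕ → X) : Prop :=
  Filter.Tendsto (fun n => dist (x n) (y n) / r n) Filter.atTop (nhds 0)

/-- The `≡`-equivalence class of `x` inside `Seq(X, r̃)`. -/
def classOf {X : Type*} [MetricSpace X] (r : ℕ → ℝ) (p : X) (x : ℕ → X) : Set (ℕ → X) :=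
  {y | y ∈ SeqInf r p ∧ EquivSeq r x y}

/-- The vertex set of the cluster graph `G_{X, r̃}`: all `≡`-classes of `Seq(X, r̃)`. -/
def VertexSet {X : Type*} [MetricSpace X] (r : ℕ → ℝ) (p : X) : Set (Set (ℕ → X)) :=
  {v | ∃ x ∈ SeqInf r p, v = classOf r p x}

/-- Adjacency in the cluster graph `G_{X, r̃}`: distinct classes whose representatives
are mutually stable. -/
def AdjacentCl {X : Type*} [MetricSpace X] (r : ℕ → ℝ) (p : X) (u v : Set (ℕ → X)) : Prop :=
  u ∈ VertexSet r p ∧ v ∈ VertexSet r p ∧ u ≠ v ∧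
    ∀ x ∈ u, ∀ y ∈ v, MutuallyStable r x y

/-- The weight `ρ_X` on the cluster graph: for an edge `{u,v}` it is the (unique) limit
`lim d(x_n, y_n)/r_n` for representatives. -/
noncomputable def rhoX {X : Type*} [MetricSpace X] (r : ℕ → ℝ) (u v : Set (ℕ → X)) : ℝ :=
  sSup {L : ℝ | ∃ x ∈ u, ∃ y ∈ v,
    Filter.Tendsto (fun n => dist (x n) (y n) / r n) Filter.atTop (nhds L)}

/-- The root `ν₀ = X̃⁰_{∞,r̃}`: sequences with `d(z_n,p) → ∞` and `d(z_n,p)/r_n → 0`. -/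
def rootClass {X : Type*} [MetricSpace X] (r : ℕ → ℝ) (p : X) : Set (ℕ → X) :=
  {z | Filter.Tendsto (fun n => dist (z n) p) Filter.atTop Filter.atTop ∧
    Filter.Tendsto (fun n => dist (z n) p / r n) Filter.atTop (nhds 0)}

/-- The labeling `ρ⁰` of vertices: `ρ⁰(v) = lim d(x_n,p)/r_n` for `x̃ ∈ v`. -/
noncomputable def rho0 {X : Type*} [MetricSpace X] (r : ℕ → ℝ) (p : X)
    (v : Set (ℕ → X)) : ℝ :=
  sSup {L : ℝ | ∃ x ∈ v, Filter.Tendsto (fun n => dist (x n) p / r n) Filter.atTop (nhds L)}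

/-- A self-stable family: a subset of `Seq(X, r̃)` any two of whose members are
mutually stable. -/
def SelfStable {X : Type*} [MetricSpace X] (r : ℕ → ℝ) (p : X) (F : Set (ℕ → X)) : Prop :=
  F ⊆ SeqInf r p ∧ ∀ x ∈ F, ∀ y ∈ F, MutuallyStable r x y

/-- A maximal self-stable set `X̃_{∞, r̃}`. -/
def MaxSelfStable {X : Type*} [MetricSpace X] (r : ℕ → ℝ) (p : X) (F : Set (ℕ → X)) : Prop :=
  SelfStable r p F ∧ ∀ F', SelfStable r p F' → F ⊆ F' → F = F'

/-- The pretangent space `Ω^X_{∞,r̃}` attached to a maximal self-stable set `F`: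
the set of `≡`-classes of members of `F`. -/
def PretangentCl {X : Type*} [MetricSpace X] (r : ℕ → ℝ) (F : Set (ℕ → X)) :
    Set (Set (ℕ → X)) :=
  {v | ∃ x ∈ F, v = {y | y ∈ F ∧ EquivSeq r x y}}

/-- A clique in the cluster graph `G_{X, r̃}`. -/
def IsCliqueCl {X : Type*} [MetricSpace X] (r : ℕ → ℝ) (p : X)
    (C : Set (Set (ℕ → X))) : Prop :=
  C ⊆ VertexSet r p ∧ ∀ u ∈ C, ∀ v ∈ C, u ≠ v → AdjacentCl r p u v

/-!
Two distinct classes with label `c` have representatives `x`, `y` with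
`d(xₙ, p)/rₙ → c`, `d(yₙ, p)/rₙ → c` and `d(xₙ, yₙ)/rₙ ≥ ε` on an infinite set `N`.
Index `N` by pairs `⟨m, j⟩` and, for each `S ⊆ ℕ`, let `z_S` follow `x` at the points
`⟨m, j⟩` with `m ∈ S` and `j` odd, and `y` elsewhere. Every `z_S` still has label `c`.
For `S ≠ S'` and `m ∈ S ∆ S'`, the ratio `d(z_S, z_S')/r` vanishes at the points `⟨m, 2j⟩`
and is at least `ε` at the points `⟨m, 2j + 1⟩`, so it has no limit: the classes of the
`z_S` form a family of `2^ℵ₀` pairwise distinct, pairwise non-adjacent vertices.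
-/

section ClusterGraph

variable {X : Type*} [MetricSpace X] {r : ℕ → ℝ} {p : X} {x y z : ℕ → X}

lemma equivSeq_refl (x : ℕ → X) : EquivSeq r x x := by
  simp [EquivSeq]

lemma EquivSeq.symm (h : EquivSeq r x y) : EquivSeq r y x := by
  simpa only [EquivSeq, dist_comm] using h

lemma EquivSeq.trans (hr : ∀ n, 0 < r n) (hxy : EquivSeq r x y) (hyz : EquivSeq r y z) :
    EquivSeq r x z := by
  refine squeeze_zero (fun n => div_nonneg dist_nonneg (hr n).le) (fun n => ?_)
    (by simpa using hxy.add hyz)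
  rw [← add_div]
  exact div_le_div_of_nonneg_right (dist_triangle _ _ _) (hr n).le

lemma EquivSeq.mutuallyStable (h : EquivSeq r x y) : MutuallyStable r x y := ⟨0, h⟩

lemma MutuallyStable.symm (h : MutuallyStable r x y) : MutuallyStable r y x := by
  simpa only [MutuallyStable, dist_comm] using h

lemma EquivSeq.tendsto_dist_div (hr : ∀ n, 0 < r n) (hxy : EquivSeq r x y) {L : ℝ}
    (hx : Tendsto (fun n => dist (x n) p / r n) atTop (𝓝 L)) :
    Tendsto (fun n => dist (y n) p / r n) atTop (𝓝 L) := by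
  have hdiff : Tendsto (fun n => dist (y n) p / r n - dist (x n) p / r n) atTop (𝓝 0) := by
    refine squeeze_zero_norm (fun n => ?_) hxy
    rw [div_sub_div_same, Real.norm_eq_abs, abs_div, abs_of_pos (hr n), abs_sub_comm]
    exact div_le_div_of_nonneg_right (abs_dist_sub_le _ _ _) (hr n).le
  simpa using hx.add hdiff

lemma exists_frequently_le_of_not_equivSeq (hr : ∀ n, 0 < r n) (h : ¬ EquivSeq r x y) :
    ∃ ε > 0, ∃ᶠ n in atTop, ε ≤ dist (x n) (y n) / r n := by
  by_contra! H
  refine h (tendsto_order.2 ⟨fun a ha => ?_, H⟩)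
  exact Eventually.of_forall fun n => ha.trans_le (div_nonneg dist_nonneg (hr n).le)

lemma not_mutuallyStable_of_frequently {ε : ℝ} (hε : 0 < ε) (h₀ : ∃ᶠ n in atTop, x n = y n)
    (h₁ : ∃ᶠ n in atTop, ε ≤ dist (x n) (y n) / r n) : ¬ MutuallyStable r x y := by
  rintro ⟨L, hL⟩
  have hL₀ : L = 0 :=
    isClosed_singleton.mem_of_frequently_of_tendsto (h₀.mono fun n h => by simp [h]) hL
  have hL₁ : ε ≤ L := isClosed_Ici.mem_of_frequently_of_tendsto h₁ hL
  linarith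

lemma mem_classOf_self (hx : x ∈ SeqInf r p) : x ∈ classOf r p x := ⟨hx, equivSeq_refl x⟩

lemma classOf_eq_of_equivSeq (hr : ∀ n, 0 < r n) (h : EquivSeq r x y) :
    classOf r p x = classOf r p y := by
  ext z
  exact and_congr_right fun _ => ⟨h.symm.trans hr, h.trans hr⟩

lemma rho0_classOf (hr : ∀ n, 0 < r n) (hx : x ∈ SeqInf r p) {L : ℝ}
    (hL : Tendsto (fun n => dist (x n) p / r n) atTop (𝓝 L)) :
    rho0 r p (classOf r p x) = L := by
  have hlimits : {L' : ℝ | ∃ y ∈ classOf r p x,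
      Tendsto (fun n => dist (y n) p / r n) atTop (𝓝 L')} = {L} := by
    ext L'
    constructor
    · rintro ⟨y, ⟨-, hxy⟩, hL'⟩
      exact tendsto_nhds_unique hL' (hxy.tendsto_dist_div hr hL)
    · rintro rfl
      exact ⟨x, mem_classOf_self hx, hL⟩
  rw [rho0, hlimits, csSup_singleton]

lemma tendsto_rho0_classOf (hr : ∀ n, 0 < r n) (hx : x ∈ SeqInf r p) :
    Tendsto (fun n => dist (x n) p / r n) atTop (𝓝 (rho0 r p (classOf r p x))) := by
  obtain ⟨L, hL⟩ := hx.2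
  rwa [rho0_classOf hr hx hL]

lemma not_adjacentCl_classOf (hx : x ∈ SeqInf r p) (hy : y ∈ SeqInf r p)
    (h : ¬ MutuallyStable r x y) : ¬ AdjacentCl r p (classOf r p x) (classOf r p y) :=
  fun hadj => h (hadj.2.2.2 x (mem_classOf_self hx) y (mem_classOf_self hy))

lemma classOf_injective {ι : Type*} {z : ι → ℕ → X} (hz : ∀ i, z i ∈ SeqInf r p)
    (hst : Pairwise fun i j => ¬ MutuallyStable r (z i) (z j)) :
    Function.Injective fun i => classOf r p (z i) := by
  intro i j (hij : classOf r p (z i) = classOf r p (z j))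
  by_contra hne
  have hj : z j ∈ classOf r p (z i) := hij ▸ mem_classOf_self (hz j)
  exact hst hne hj.2.mutuallyStable

end ClusterGraph

section MixSeq

variable {X : Type*} {x y : ℕ → X} {P : ℕ → Prop}

/-- Writing the index `Nat.count P n` of `n` in `{n | P n}` as `Nat.pair m j`, the sequence
follows `x` exactly when `m ∈ S` and `j` is odd. -/
noncomputable def mixSeq (P : ℕ → Prop) (S : Set ℕ) (x y : ℕ → X) (n : ℕ) : X :=
  if (Nat.count P n).unpair.1 ∈ S ∧ Odd (Nat.count P n).unpair.2 then x n else y n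

lemma mixSeq_nth (hP : (Set.ofPred P).Infinite) (S : Set ℕ) (k : ℕ) :
    mixSeq P S x y (Nat.nth P k) =
      if k.unpair.1 ∈ S ∧ Odd k.unpair.2 then x (Nat.nth P k) else y (Nat.nth P k) := by
  simp only [mixSeq, Nat.count_nth_of_infinite hP]

lemma Filter.Tendsto.mixSeq {β : Type*} {l : Filter β} {F : ℕ → X → β}
    (hx : Tendsto (fun n => F n (x n)) atTop l) (hy : Tendsto (fun n => F n (y n)) atTop l)
    (S : Set ℕ) : Tendsto (fun n => F n (mixSeq P S x y n)) atTop l := by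
  simp only [_root_.mixSeq, apply_ite (F _)]
  exact hx.if' hy

lemma frequently_nth_pair (hP : (Set.ofPred P).Infinite) (m b : ℕ) {Q : ℕ → Prop}
    (h : ∀ j, Q (Nat.nth P (Nat.pair m (2 * j + b)))) : ∃ᶠ n in atTop, Q n := by
  have hle : ∀ j, j ≤ Nat.nth P (Nat.pair m (2 * j + b)) := fun j =>
    (by omega : j ≤ 2 * j + b).trans
      ((Nat.right_le_pair m _).trans ((Nat.nth_strictMono hP).id_le _))
  exact (tendsto_atTop_mono hle tendsto_id).frequently (Frequently.of_forall h)

variable [MetricSpace X] {r : ℕ → ℝ}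

lemma mixSeq_mem_seqInf {p : X} {L : ℝ} (hx : x ∈ SeqInf r p) (hy : y ∈ SeqInf r p)
    (hxL : Tendsto (fun n => dist (x n) p / r n) atTop (𝓝 L))
    (hyL : Tendsto (fun n => dist (y n) p / r n) atTop (𝓝 L)) (S : Set ℕ) :
    mixSeq P S x y ∈ SeqInf r p :=
  ⟨hx.1.mixSeq (F := fun _ z => dist z p) hy.1 S, L,
    hxL.mixSeq (F := fun n z => dist z p / r n) hyL S⟩

lemma not_mutuallyStable_mixSeq_of_mem_of_notMem {ε : ℝ} (hε : 0 < ε)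
    (hP : (Set.ofPred P).Infinite) (hPε : ∀ n, P n → ε ≤ dist (x n) (y n) / r n)
    {S S' : Set ℕ} {m : ℕ} (hm : m ∈ S) (hm' : m ∉ S') :
    ¬ MutuallyStable r (mixSeq P S x y) (mixSeq P S' x y) := by
  refine not_mutuallyStable_of_frequently hε (frequently_nth_pair hP m 0 fun j => ?_)
    (frequently_nth_pair hP m 1 fun j => ?_)
  · simp [mixSeq_nth hP, Nat.not_odd_iff_even.2 (even_two_mul j)]
  · simpa [mixSeq_nth hP, hm, hm'] using hPε _ (Nat.nth_mem_of_infinite hP _)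

lemma not_mutuallyStable_mixSeq {ε : ℝ} (hε : 0 < ε)
    (hP : (Set.ofPred P).Infinite) (hPε : ∀ n, P n → ε ≤ dist (x n) (y n) / r n) :
    Pairwise fun S S' => ¬ MutuallyStable r (mixSeq P S x y) (mixSeq P S' x y) := by
  intro S S' hSS'
  obtain ⟨m, hm⟩ := not_forall.1 (mt Set.ext hSS')
  by_cases hmS : m ∈ S
  · exact not_mutuallyStable_mixSeq_of_mem_of_notMem hε hP hPε hmS (by tauto)
  · exact fun h => not_mutuallyStable_mixSeq_of_mem_of_notMem hε hP hPε (by tauto) hmS h.symm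

end MixSeq

lemma Cardinal.mk_range_eq_continuum_of_injective {α : Type*} {f : Set ℕ → α}
    (hf : Function.Injective f) : Cardinal.mk (Set.range f) = Cardinal.continuum := by
  have h := Cardinal.mk_range_eq_of_injective hf
  rwa [Cardinal.lift_uzero, Cardinal.mk_set, Cardinal.mk_nat, Cardinal.two_power_aleph0,
    Cardinal.lift_continuum] at h

theorem independent_continuum_of_rho0_eq_general {X : Type*} [MetricSpace X]
    (p : X) (r : ℕ → ℝ) (hr : ScalingSeq r)
    (ν₁ ν₂ : Set (ℕ → X)) (h₁ : ν₁ ∈ VertexSet r p) (h₂ : ν₂ ∈ VertexSet r p)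
    (hne : ν₁ ≠ ν₂) (c : ℝ)
    (e₁ : rho0 r p ν₁ = c) (e₂ : rho0 r p ν₂ = c) :
    ∃ I ⊆ VertexSet r p, Cardinal.mk ↥I = Cardinal.continuum ∧
      (∀ u ∈ I, ∀ v ∈ I, u ≠ v → ¬AdjacentCl r p u v) ∧
      ∀ v ∈ I, rho0 r p v = c := by
  obtain ⟨hrpos, -⟩ := hr
  obtain ⟨x, hx, rfl⟩ := h₁
  obtain ⟨y, hy, rfl⟩ := h₂
  have hxc := e₁ ▸ tendsto_rho0_classOf hrpos hx
  have hyc := e₂ ▸ tendsto_rho0_classOf hrpos hy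
  obtain ⟨ε, hε, hfreq⟩ :=
    exists_frequently_le_of_not_equivSeq hrpos fun h => hne (classOf_eq_of_equivSeq hrpos h)
  set P := fun n => ε ≤ dist (x n) (y n) / r n
  have hP : (Set.ofPred P).Infinite := Nat.frequently_atTop_iff_infinite.1 hfreq
  have hz (S : Set ℕ) : mixSeq P S x y ∈ SeqInf r p := mixSeq_mem_seqInf hx hy hxc hyc S
  have hst := not_mutuallyStable_mixSeq (r := r) hε hP fun _ h => h
  refine ⟨Set.range fun S => classOf r p (mixSeq P S x y), ?_,
    Cardinal.mk_range_eq_continuum_of_injective (classOf_injective hz hst), ?_, ?_⟩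
  · rintro _ ⟨S, rfl⟩
    exact ⟨_, hz S, rfl⟩
  · rintro _ ⟨S, rfl⟩ _ ⟨S', rfl⟩ hSS'
    exact not_adjacentCl_classOf (hz S) (hz S') (hst fun h => hSS' (h ▸ rfl))
  · rintro _ ⟨S, rfl⟩
    exact rho0_classOf hrpos (hz S) (hxc.mixSeq (F := fun n z => dist z p / r n) hyc S)

/-- Lemma l2.2.4, second part. If two distinct vertices carry the same
label `c`, then there is an independent set of cardinality continuum all of whose
members carry the label `c`. -/
theorem independent_continuum_of_rho0_eq {X : Type*} [MetricSpace X]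
    (hX : UnboundedSpace X) (p : X) (r : ℕ → ℝ) (hr : ScalingSeq r)
    (ν₁ ν₂ : Set (ℕ → X)) (h₁ : ν₁ ∈ VertexSet r p) (h₂ : ν₂ ∈ VertexSet r p)
    (hne : ν₁ ≠ ν₂) (c : ℝ) (hc : 0 ≤ c)
    (e₁ : rho0 r p ν₁ = c) (e₂ : rho0 r p ν₂ = c) :
    ∃ I ⊆ VertexSet r p, Cardinal.mk ↥I = Cardinal.continuum ∧
      (∀ u ∈ I, ∀ v ∈ I, u ≠ v → ¬AdjacentCl r p u v) ∧
      ∀ v ∈ I, rho0 r p v = c :=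
  independent_continuum_of_rho0_eq_general p r hr ν₁ ν₂ h₁ h₂ hne c e₁ e₂
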